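/- arXiv:1110.1351 — 6 statements merged into one kernel-verified Lean document; each statement's English description precedes it below -/
import Mathlib

section
/- Let p and q be unit quaternions. The Dirac measure concentrated at p and the Dirac measure concentrated at q are equivalent mixed quantum strategies if and only if q = p or q = -p. -/
noncomputable section

open MeasureTheory

local notation "ℍ" => Quaternion ℝ

instance : MeasurableSpace (Quaternion ℝ) := borel _
instance : BorelSpace (Quaternion ℝ) := ⟨rfl⟩

/-- The four real coordinates of a quaternion: `p = π₁(p) + π₂(p)i + π₃(p)j + π₄(p)k`. -/
def piQ (t : Fin 4) (p : ℍ) : ℝ := ![p.re, p.imI, p.imJ, p.imK] t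

/-- The standard inner product on ℍ ≅ ℝ⁴. -/
def qinner (p q : ℍ) : ℝ := ∑ t : Fin 4, piQ t p * piQ t q

/-- The quaternions `i`, `j`, `k`. -/
def qI : ℍ := ⟨0, 1, 0, 0⟩
def qJ : ℍ := ⟨0, 0, 1, 0⟩
def qK : ℍ := ⟨0, 0, 0, 1⟩

/-- A mixed quantum strategy: a Borel probability measure on the unit quaternions. -/
def IsMixed (μ : Measure ℍ) : Prop :=
  IsProbabilityMeasure μ ∧ μ {p : ℍ | ‖p‖ = 1} = 1

/-- Quantum payoff with payoff vector `X`: `P^Q(p,q) = Σ_t π_t(pq)² X_t`. -/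
def payoff (X : Fin 4 → ℝ) (p q : ℍ) : ℝ :=
  ∑ t : Fin 4, (piQ t (p * q)) ^ 2 * X t

/-- Expected payoff of a pair of mixed strategies. -/
def payoffM (X : Fin 4 → ℝ) (ν μ : Measure ℍ) : ℝ :=
  ∫ p, ∫ q, payoff X p q ∂μ ∂ν

/-- Mixed-strategy Nash equilibrium of the quantum game with payoff vectors `X`, `Y`. -/
def IsNash (X Y : Fin 4 → ℝ) (ν μ : Measure ℍ) : Prop :=
  IsMixed ν ∧ IsMixed μ ∧
    (∀ ν' : Measure ℍ, IsMixed ν' → payoffM X ν' μ ≤ payoffM X ν μ) ∧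
    (∀ μ' : Measure ℍ, IsMixed μ' → payoffM Y ν μ' ≤ payoffM Y ν μ)

/-- Equivalence of mixed quantum strategies. -/
def StratEquiv (μ μ' : Measure ℍ) : Prop :=
  ∀ p : ℍ, ‖p‖ = 1 → ∀ t : Fin 4,
    ∫ q, (piQ t (p * q)) ^ 2 ∂μ = ∫ q, (piQ t (p * q)) ^ 2 ∂μ'

/-- Equivalence of pairs of mixed strategies: `(ν,μ) ∼ (ν',μ')` iff there is a unit
quaternion `u` with `ν' ∼ ν·u` and `μ' ∼ u⁻¹·μ`. -/
def PairEquiv (ν μ ν' μ' : Measure ℍ) : Prop :=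
  ∃ u : ℍ, ‖u‖ = 1 ∧
    StratEquiv (Measure.map (fun p => p * u) ν) ν' ∧
    StratEquiv (Measure.map (fun q => u⁻¹ * q) μ) μ'

/-- A generic two-by-two game: all payoffs distinct and all pairwise sums distinct. -/
def Generic (X Y : Fin 4 → ℝ) : Prop :=
  Function.Injective X ∧ Function.Injective Y ∧
    (∀ s t s' t' : Fin 4, s < t → s' < t' → X s + X t = X s' + X t' → s = s' ∧ t = t') ∧
    (∀ s t s' t' : Fin 4, s < t → s' < t' → Y s + Y t = Y s' + Y t' → s = s' ∧ t = t')

/-- `K(p) = π₁(p)π₂(p)π₃(p)π₄(p)`. -/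
def K (p : ℍ) : ℝ := p.re * p.imI * p.imJ * p.imK

/-- Intertwined quadruple of quaternions. -/
def Intertwined (p q r s : ℍ) : Prop :=
  ∃ α : ℝ, α ≠ 0 ∧ ∀ X Y : ℝ, α * K (X • p + Y • q) = K (X • r + Y • s)

/-- Fully intertwined quadruple of quaternions. -/
def FullyIntertwined (p q r s : ℍ) : Prop :=
  Intertwined p q r s ∧ Intertwined p r q s

/-- `p` is an optimal response for Player One to the mixed strategy `μ`. -/
def Optimal₁ (X : Fin 4 → ℝ) (μ : Measure ℍ) (p : ℍ) : Prop :=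
  ‖p‖ = 1 ∧ ∀ p' : ℍ, ‖p'‖ = 1 → ∫ q, payoff X p' q ∂μ ≤ ∫ q, payoff X p q ∂μ

/-- `q` is an optimal response for Player Two to the mixed strategy `ν`. -/
def Optimal₂ (Y : Fin 4 → ℝ) (ν : Measure ℍ) (q : ℍ) : Prop :=
  ‖q‖ = 1 ∧ ∀ q' : ℍ, ‖q'‖ = 1 → ∫ p, payoff Y p q' ∂ν ≤ ∫ p, payoff Y p q ∂ν

lemma piQ_neg (t : Fin 4) (x : ℍ) : piQ t (-x) = -piQ t x := by
  fin_cases t <;> simp [piQ]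

lemma stratEquiv_dirac_iff (p q : ℍ) :
    StratEquiv (Measure.dirac p) (Measure.dirac q) ↔
      ∀ r : ℍ, ‖r‖ = 1 → ∀ t, piQ t (r * p) ^ 2 = piQ t (r * q) ^ 2 := by
  simp only [StratEquiv, integral_dirac]

lemma eq_one_or_eq_neg_one_of_sq_piQ_eq {u : ℍ} (h : ∀ t, piQ t u ^ 2 = piQ t 1 ^ 2) :
    u = 1 ∨ u = -1 := by
  open scoped Quaternion in
  have hI : u.imI = 0 := by simpa [piQ] using h 1
  have hJ : u.imJ = 0 := by simpa [piQ] using h 2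
  have hK : u.imK = 0 := by simpa [piQ] using h 3
  rcases sq_eq_one_iff.mp (by simpa [piQ] using h 0 : u.re ^ 2 = 1) with hre | hre
  · left; ext <;> simp [hre, hI, hJ, hK]
  · right; ext <;> simp [hre, hI, hJ, hK]

theorem dirac_equiv_iff_general (p q : ℍ) (hp : ‖p‖ = 1) :
    StratEquiv (Measure.dirac p) (Measure.dirac q) ↔ q = p ∨ q = -p := by
  rw [stratEquiv_dirac_iff]
  constructor
  · intro h
    have hp0 : p ≠ 0 := norm_ne_zero_iff.mp (by simp [hp])
    have hq : q = p * (p⁻¹ * q) := (mul_inv_cancel_left₀ hp0 q).symm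
    -- Testing with `r = p⁻¹` shows that `p⁻¹ * q` has the squared coordinates of `1`.
    rcases eq_one_or_eq_neg_one_of_sq_piQ_eq fun t => by
        simpa [inv_mul_cancel₀ hp0] using (h p⁻¹ (by simp [hp]) t).symm with hu | hu
    · left; rw [hq, hu, mul_one]
    · right; rw [hq, hu, mul_neg_one]
  · rintro (rfl | rfl) r _ t
    · rfl
    · rw [mul_neg, piQ_neg, neg_sq]

/-- For unit quaternions `p`, `q`, the Dirac measures at `p` and `q` are
equivalent mixed quantum strategies iff `q = p` or `q = -p`. -/
theorem dirac_equiv_iff (p q : ℍ) (hp : ‖p‖ = 1) (hq : ‖q‖ = 1) :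
    StratEquiv (Measure.dirac p) (Measure.dirac q) ↔ q = p ∨ q = -p :=
  dirac_equiv_iff_general p q hp
end
end

section
/- Let G be any two-by-two game, let (ν,μ) be a pair of mixed quantum strategies, and let u be a unit quaternion. Then (ν,μ) is a mixed-strategy Nash equilibrium of G^Q if and only if (ν·u, u⁻¹·μ) is a mixed-strategy Nash equilibrium of G^Q. -/
noncomputable section

open MeasureTheory

local notation "ℍ" => Quaternion ℝ

section Aux

lemma continuous_piQ (t : Fin 4) : Continuous (piQ t) := by
  fin_cases t
  · exact Quaternion.continuous_re
  · exact Quaternion.continuous_imI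
  · exact Quaternion.continuous_imJ
  · exact Quaternion.continuous_imK

set_option maxHeartbeats 800000 in
lemma continuous_payoff (X : Fin 4 → ℝ) :
    Continuous (fun pq : ℍ × ℍ => payoff X pq.1 pq.2) := by
  unfold payoff
  apply continuous_finset_sum
  intro t _
  exact ((((continuous_piQ t).comp (continuous_fst.mul continuous_snd)).pow 2).mul
    continuous_const)

lemma continuous_payoff_right (X : Fin 4 → ℝ) (p : ℍ) :
    Continuous (fun q => payoff X p q) := by
  unfold payoff
  apply continuous_finset_sum
  intro t _
  exact (((continuous_piQ t).comp (continuous_mul_left p)).pow 2).mul continuous_const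

lemma measurable_mul_right' (u : ℍ) : Measurable (fun p : ℍ => p * u) :=
  (continuous_mul_right u).measurable

lemma measurable_mul_left' (u : ℍ) : Measurable (fun p : ℍ => u * p) :=
  (continuous_mul_left u).measurable

lemma payoff_eq_of_mul_eq (X : Fin 4 → ℝ) {p q p' q' : ℍ} (h : p * q = p' * q') :
    payoff X p q = payoff X p' q' := by
  unfold payoff; rw [h]

lemma isMixed_map_right (ν : Measure ℍ) (hν : IsMixed ν) (u : ℍ) (hu : ‖u‖ = 1) :
    IsMixed (Measure.map (fun p => p * u) ν) := by
  obtain ⟨h1, h2⟩ := hν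
  refine ⟨Measure.isProbabilityMeasure_map (measurable_mul_right' u).aemeasurable, ?_⟩
  rw [Measure.map_apply (measurable_mul_right' u)
    (isClosed_eq continuous_norm continuous_const).measurableSet]
  have : (fun p : ℍ => p * u) ⁻¹' {p : ℍ | ‖p‖ = 1} = {p : ℍ | ‖p‖ = 1} := by
    ext p; simp [norm_mul, hu]
  rw [this, h2]

lemma isMixed_map_left (μ : Measure ℍ) (hμ : IsMixed μ) (u : ℍ) (hu : ‖u‖ = 1) :
    IsMixed (Measure.map (fun q => u * q) μ) := by
  obtain ⟨h1, h2⟩ := hμ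
  refine ⟨Measure.isProbabilityMeasure_map (measurable_mul_left' u).aemeasurable, ?_⟩
  rw [Measure.map_apply (measurable_mul_left' u)
    (isClosed_eq continuous_norm continuous_const).measurableSet]
  have : (fun q : ℍ => u * q) ⁻¹' {p : ℍ | ‖p‖ = 1} = {p : ℍ | ‖p‖ = 1} := by
    ext p; simp [norm_mul, hu]
  rw [this, h2]

lemma sm_inner (X : Fin 4 → ℝ) (μ : Measure ℍ) [SFinite μ] :
    StronglyMeasurable (fun p => ∫ q, payoff X p q ∂μ) :=
  (continuous_payoff X).stronglyMeasurable.integral_prod_right'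

/-- Moving a left-translation of the second measure to a right-translation of the first. -/
lemma payoffM_left (X : Fin 4 → ℝ) (ν μ : Measure ℍ) [SFinite μ] (v : ℍ) :
    payoffM X ν (Measure.map (fun q => v * q) μ) = payoffM X (Measure.map (fun p => p * v) ν) μ := by
  unfold payoffM
  rw [integral_map (measurable_mul_right' v).aemeasurable
    (sm_inner X μ).aestronglyMeasurable]
  congr 1; funext p
  rw [integral_map (measurable_mul_left' v).aemeasurable
    (continuous_payoff_right X p).aestronglyMeasurable]
  congr 1; funext q
  exact payoff_eq_of_mul_eq X (mul_assoc p v q).symm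

/-- Moving a right-translation of the first measure to a left-translation of the second. -/
lemma payoffM_right (X : Fin 4 → ℝ) (ν μ : Measure ℍ) [SFinite μ] (u : ℍ) :
    payoffM X (Measure.map (fun p => p * u) ν) μ = payoffM X ν (Measure.map (fun q => u * q) μ) :=
  (payoffM_left X ν μ u).symm

lemma map_map_left_cancel (μ : Measure ℍ) (u : ℍ) (hu : u ≠ 0) :
    Measure.map (fun q => u * q) (Measure.map (fun q => u⁻¹ * q) μ) = μ := by
  rw [Measure.map_map (measurable_mul_left' u) (measurable_mul_left' u⁻¹)]
  have : (fun q : ℍ => u * q) ∘ (fun q : ℍ => u⁻¹ * q) = id := by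
    funext q; simp [← mul_assoc, mul_inv_cancel₀ hu]
  rw [this, Measure.map_id]

lemma map_map_right_cancel (ν : Measure ℍ) (u : ℍ) (hu : u ≠ 0) :
    Measure.map (fun p => p * u⁻¹) (Measure.map (fun p => p * u) ν) = ν := by
  rw [Measure.map_map (measurable_mul_right' u⁻¹) (measurable_mul_right' u)]
  have : (fun p : ℍ => p * u⁻¹) ∘ (fun p : ℍ => p * u) = id := by
    funext p; simp [mul_assoc, mul_inv_cancel₀ hu]
  rw [this, Measure.map_id]

lemma payoffM_translate (X : Fin 4 → ℝ) (ν μ : Measure ℍ) [SFinite μ] (u : ℍ) (hu : u ≠ 0) :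
    payoffM X (Measure.map (fun p => p * u) ν) (Measure.map (fun q => u⁻¹ * q) μ) =
      payoffM X ν μ := by
  have : SFinite (Measure.map (fun q => u⁻¹ * q) μ) := inferInstance
  rw [payoffM_right X ν _ u, map_map_left_cancel μ u hu]

lemma nash_translate (X Y : Fin 4 → ℝ) (ν μ : Measure ℍ)
    (hν : IsMixed ν) (hμ : IsMixed μ) (u : ℍ) (hu : ‖u‖ = 1)
    (h : IsNash X Y ν μ) :
    IsNash X Y (Measure.map (fun p => p * u) ν) (Measure.map (fun q => u⁻¹ * q) μ) := by
  have hu0 : u ≠ 0 := by intro h0; rw [h0] at hu; simp at hu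
  have hui : ‖u⁻¹‖ = 1 := by rw [norm_inv, hu]; norm_num
  have hμP : IsProbabilityMeasure μ := hμ.1
  have hνP : IsProbabilityMeasure ν := hν.1
  obtain ⟨_, _, hN1, hN2⟩ := h
  have huinv : (fun q : ℍ => u⁻¹ * q) = (fun q : ℍ => u⁻¹ * q) := rfl
  refine ⟨isMixed_map_right ν hν u hu, ?_, ?_, ?_⟩
  · have : Measure.map (fun q => u⁻¹ * q) μ = Measure.map (fun q => u⁻¹ * q) μ := rfl
    exact isMixed_map_left μ hμ u⁻¹ hui
  · intro ν' hν'
    have hSF : SFinite μ := inferInstance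
    calc payoffM X ν' (Measure.map (fun q => u⁻¹ * q) μ)
        = payoffM X (Measure.map (fun p => p * u⁻¹) ν') μ := payoffM_left X ν' μ u⁻¹
      _ ≤ payoffM X ν μ := hN1 _ (isMixed_map_right ν' hν' u⁻¹ hui)
      _ = payoffM X (Measure.map (fun p => p * u) ν) (Measure.map (fun q => u⁻¹ * q) μ) :=
          (payoffM_translate X ν μ u hu0).symm
  · intro μ' hμ'
    have hμ'P : IsProbabilityMeasure μ' := hμ'.1
    calc payoffM Y (Measure.map (fun p => p * u) ν) μ'
        = payoffM Y ν (Measure.map (fun q => u * q) μ') := payoffM_right Y ν μ' u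
      _ ≤ payoffM Y ν μ := hN2 _ (isMixed_map_left μ' hμ' u hu)
      _ = payoffM Y (Measure.map (fun p => p * u) ν) (Measure.map (fun q => u⁻¹ * q) μ) :=
          (payoffM_translate Y ν μ u hu0).symm

end Aux

/-- `(ν,μ)` is a Nash equilibrium of `G^Q` iff `(ν·u, u⁻¹·μ)` is. -/
theorem nash_iff_translate (X Y : Fin 4 → ℝ) (ν μ : Measure ℍ)
    (hν : IsMixed ν) (hμ : IsMixed μ) (u : ℍ) (hu : ‖u‖ = 1) :
    IsNash X Y ν μ ↔
      IsNash X Y (Measure.map (fun p => p * u) ν) (Measure.map (fun q => u⁻¹ * q) μ) := by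
  have hu0 : u ≠ 0 := by intro h0; rw [h0] at hu; simp at hu
  have hui : ‖u⁻¹‖ = 1 := by rw [norm_inv, hu]; norm_num
  constructor
  · exact nash_translate X Y ν μ hν hμ u hu
  · intro h
    have h' := nash_translate X Y _ _ (isMixed_map_right ν hν u hu)
      (isMixed_map_left μ hμ u⁻¹ hui) u⁻¹ hui h
    rwa [map_map_right_cancel ν u hu0, inv_inv, map_map_left_cancel μ u hu0] at h'
end
end

section
/- Let G be a generic two-by-two game and let (ν,μ) be a mixed-strategy Nash equilibrium of G^Q in which each of ν and μ is supported on a set of at most four pairwise orthogonal unit quaternions. If the support of either ν or μ contains four points, then each of ν and μ assigns probability exactly 1/4 to each of four pairwise orthogonal unit quaternions. -/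
noncomputable section

open MeasureTheory

local notation "ℍ" => Quaternion ℝ

/-!
Write `ν = ∑ aⱼ δ_{qⱼ}` and `μ = ∑ bᵢ δ_{rᵢ}`, and let `F p = ∑ bᵢ P₁(p, rᵢ)` be Player One's
payoff against `μ`. By Parseval, `∑ⱼ P₁(fⱼ, r) = ∑ₜ Xₜ` for every orthonormal basis `f` of `ℍ` and
unit `r`, so `F` sums to `∑ₜ Xₜ` over every orthonormal basis. If all `aⱼ > 0`, every `qⱼ` is a best
response, so the maximum `m` of `F` on the unit sphere is attained at the four `qⱼ` and
`4m = ∑ₜ Xₜ`. Every unit `p` lies in an orthonormal basis on which `F` also sums to `4m`, hence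
`F ≡ m` on the sphere, i.e. the quadratic form `∑ (bᵢ - 1/4) P₁(·, rᵢ)` vanishes identically, and
genericity of `X` forces its coefficients `bᵢ - 1/4` to vanish. As `P(p, q) = P(q̄, p̄)`, the same argument
with the players exchanged shows `aⱼ = 1/4` once all `bᵢ > 0`, so a four-point support on either
side propagates to the other.
-/

open scoped RealInnerProductSpace

lemma qinner_eq_inner (p q : ℍ) : qinner p q = ⟪p, q⟫ := by
  simp [qinner, piQ, Fin.sum_univ_four, Quaternion.inner_def]

lemma inner_star_star (a b : ℍ) : ⟪star a, star b⟫ = ⟪a, b⟫ := by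
  simp only [Quaternion.inner_def, Quaternion.re_mul, Quaternion.re_star, Quaternion.imI_star,
    Quaternion.imJ_star, Quaternion.imK_star, star_star]
  ring

lemma inner_mul_mul_right (a b c : ℍ) : ⟪a * c, b * c⟫ = ‖c‖ ^ 2 * ⟪a, b⟫ := by
  have hc := Quaternion.normSq_eq_norm_mul_self c
  rw [Quaternion.normSq_def'] at hc
  simp only [Quaternion.inner_def, Quaternion.re_mul, Quaternion.imI_mul, Quaternion.imJ_mul,
    Quaternion.imK_mul, Quaternion.re_star, Quaternion.imI_star, Quaternion.imJ_star,
    Quaternion.imK_star, star_mul]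
  rw [sq, ← hc]
  ring

lemma inner_mul_mul_left (c a b : ℍ) : ⟪c * a, c * b⟫ = ‖c‖ ^ 2 * ⟪a, b⟫ := by
  rw [← inner_star_star, star_mul, star_mul, inner_mul_mul_right, Quaternion.norm_star,
    inner_star_star]

section Orthonormal

variable {ι : Type*} {f : ι → ℍ}

lemma orthonormal_mul_left {c : ℍ} (hc : ‖c‖ = 1) (hf : Orthonormal ℝ f) :
    Orthonormal ℝ (fun i => c * f i) := by
  classical
  rw [orthonormal_iff_ite] at hf ⊢
  simpa [inner_mul_mul_left, hc] using hf

lemma orthonormal_mul_right {c : ℍ} (hc : ‖c‖ = 1) (hf : Orthonormal ℝ f) :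
    Orthonormal ℝ (fun i => f i * c) := by
  classical
  rw [orthonormal_iff_ite] at hf ⊢
  simpa [inner_mul_mul_right, hc] using hf

lemma orthonormal_star (hf : Orthonormal ℝ f) : Orthonormal ℝ (fun i => star (f i)) := by
  classical
  rw [orthonormal_iff_ite] at hf ⊢
  simpa [inner_star_star] using hf

lemma orthonormal_of_qinner (h1 : ∀ i, ‖f i‖ = 1) (h2 : ∀ i j, i ≠ j → qinner (f i) (f j) = 0) :
    Orthonormal ℝ f :=
  ⟨h1, fun i j hij => (qinner_eq_inner (f i) (f j)).symm.trans (h2 i j hij)⟩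

end Orthonormal

def orthonormalBasisOneIJK : OrthonormalBasis (Fin 4) ℝ ℍ :=
  OrthonormalBasis.ofRepr Quaternion.linearIsometryEquivTuple

lemma piQ_eq_inner (t : Fin 4) (p : ℍ) : piQ t p = ⟪orthonormalBasisOneIJK t, p⟫ := by
  rw [← OrthonormalBasis.repr_apply_apply]
  fin_cases t <;> rfl

lemma orthonormalBasisOneIJK_zero : orthonormalBasisOneIJK 0 = 1 := by
  ext <;> simp [orthonormalBasisOneIJK] <;> rfl

lemma exists_orthonormal_apply_zero_eq {p : ℍ} (hp : ‖p‖ = 1) :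
    ∃ f : Fin 4 → ℍ, Orthonormal ℝ f ∧ f 0 = p :=
  ⟨fun t => p * orthonormalBasisOneIJK t,
    orthonormal_mul_left hp orthonormalBasisOneIJK.orthonormal,
    by simp [orthonormalBasisOneIJK_zero]⟩

lemma sum_sq_piQ_of_orthonormal {f : Fin 4 → ℍ} (hf : Orthonormal ℝ f) (t : Fin 4) :
    ∑ j, piQ t (f j) ^ 2 = 1 := by
  let b := (basisOfOrthonormalOfCardEqFinrank hf
    (by simp [Quaternion.finrank_eq_four])).toOrthonormalBasis (by simpa using hf)
  simpa [b, piQ_eq_inner, real_inner_comm] using b.sum_sq_inner_right (orthonormalBasisOneIJK t)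

lemma sq_piQ_star (t : Fin 4) (x : ℍ) : piQ t (star x) ^ 2 = piQ t x ^ 2 := by
  fin_cases t <;> simp [piQ]

lemma payoff_star (X : Fin 4 → ℝ) (p q : ℍ) : payoff X p q = payoff X (star q) (star p) := by
  simp only [payoff, ← star_mul, sq_piQ_star]

lemma payoff_mul_assoc (X : Fin 4 → ℝ) (a b c : ℍ) :
    payoff X (a * b) c = payoff X a (b * c) := by
  simp only [payoff, mul_assoc]

lemma payoff_smul_left (X : Fin 4 → ℝ) (c : ℝ) (p q : ℍ) :
    payoff X (c • p) q = c ^ 2 * payoff X p q := by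
  rw [payoff, payoff, Finset.mul_sum]
  refine Finset.sum_congr rfl fun t _ => ?_
  rw [smul_mul_assoc]
  fin_cases t <;> simp [piQ] <;> ring

lemma payoff_one (X : Fin 4 → ℝ) (v : ℍ) :
    payoff X v 1 = v.re ^ 2 * X 0 + v.imI ^ 2 * X 1 + v.imJ ^ 2 * X 2 + v.imK ^ 2 * X 3 := by
  simp [payoff, Fin.sum_univ_four, piQ]

lemma payoff_of_re_eq_zero (X : Fin 4 → ℝ) (v : ℍ) {u : ℍ} (hu : u.re = 0) :
    payoff X v u = (v.imI * u.imI + v.imJ * u.imJ + v.imK * u.imK) ^ 2 * X 0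
      + (v.re * u.imI + v.imJ * u.imK - v.imK * u.imJ) ^ 2 * X 1
      + (v.re * u.imJ - v.imI * u.imK + v.imK * u.imI) ^ 2 * X 2
      + (v.re * u.imK + v.imI * u.imJ - v.imJ * u.imI) ^ 2 * X 3 := by
  simp only [payoff, Fin.sum_univ_four, piQ, Quaternion.re_mul, Quaternion.imI_mul,
    Quaternion.imJ_mul, Quaternion.imK_mul, hu, Matrix.cons_val_zero, Matrix.cons_val_one,
    Matrix.head_cons, Matrix.cons_val_two, Matrix.tail_cons, Matrix.cons_val_three]
  ring

lemma sum_payoff_orthonormal_left (X : Fin 4 → ℝ) {f : Fin 4 → ℍ} (hf : Orthonormal ℝ f)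
    {r : ℍ} (hr : ‖r‖ = 1) : ∑ j, payoff X (f j) r = ∑ t, X t := by
  have h := sum_sq_piQ_of_orthonormal (orthonormal_mul_right hr hf)
  simp only [payoff]
  rw [Finset.sum_comm]
  simp [← Finset.sum_mul, h]

lemma sum_payoff_orthonormal_right (X : Fin 4 → ℝ) {p : ℍ} (hp : ‖p‖ = 1) {f : Fin 4 → ℍ}
    (hf : Orthonormal ℝ f) : ∑ i, payoff X p (f i) = ∑ t, X t := by
  simp_rw [payoff_star X p]
  exact sum_payoff_orthonormal_left X (orthonormal_star hf) (by rwa [Quaternion.norm_star])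

lemma sum_mul_payoff_eq_zero_of_norm_eq_one {ι : Type*} [Fintype ι] (X : Fin 4 → ℝ)
    (c : ι → ℝ) (r : ι → ℍ) (h : ∀ v, ‖v‖ = 1 → ∑ i, c i * payoff X v (r i) = 0) (v : ℍ) :
    ∑ i, c i * payoff X v (r i) = 0 := by
  rcases eq_or_ne v 0 with rfl | hv
  · have h0 (i) : payoff X 0 (r i) = 0 := by simpa using payoff_smul_left X 0 0 (r i)
    simp [h0]
  · have hu := norm_smul_inv_norm (𝕜 := ℝ) hv
    rw [← smul_inv_smul₀ (norm_ne_zero_iff.2 hv) v]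
    generalize ‖v‖⁻¹ • v = u at hu ⊢
    simp only [payoff_smul_left, mul_left_comm _ (‖v‖ ^ 2), ← Finset.mul_sum, h u hu, mul_zero]

lemma eq_div_four_of_le_weighted_sum {F : ℍ → ℝ} {T : ℝ}
    (hF : ∀ f : Fin 4 → ℍ, Orthonormal ℝ f → ∑ j, F (f j) = T)
    {q : Fin 4 → ℍ} (hq : Orthonormal ℝ q) {a : Fin 4 → ℝ} (ha : ∑ j, a j = 1)
    (hapos : ∀ j, 0 < a j) (hle : ∀ p, ‖p‖ = 1 → F p ≤ ∑ j, a j * F (q j))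
    {p : ℍ} (hp : ‖p‖ = 1) : F p = T / 4 := by
  set m := ∑ j, a j * F (q j)
  have hqm : ∀ j, F (q j) = m := by
    have h := (Finset.sum_eq_sum_iff_of_le (s := .univ) (g := fun j => a j * m)
      fun j _ => mul_le_mul_of_nonneg_left (hle _ (hq.1 j)) (hapos j).le).1
      (by rw [← Finset.sum_mul, ha, one_mul])
    exact fun j => mul_left_cancel₀ (hapos j).ne' (h j (Finset.mem_univ j))
  have hT : T = 4 * m := by
    rw [← hF q hq]
    simp [hqm]
  obtain ⟨f, hf, rfl⟩ := exists_orthonormal_apply_zero_eq hp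
  have h := (Finset.sum_eq_sum_iff_of_le (s := .univ) (g := fun _ => m)
    fun t _ => hle _ (hf.1 t)).1 (by simp [hF f hf, hT])
  rw [h 0 (Finset.mem_univ _), hT]
  ring

lemma eq_zero_of_sum_mul_outer_eq_zero (c₁ c₂ c₃ x₁ y₁ z₁ x₂ y₂ z₂ x₃ y₃ z₃ : ℝ)
    (hn₁ : x₁ * x₁ + y₁ * y₁ + z₁ * z₁ = 1) (hn₂ : x₂ * x₂ + y₂ * y₂ + z₂ * z₂ = 1)
    (hn₃ : x₃ * x₃ + y₃ * y₃ + z₃ * z₃ = 1)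
    (ho₁₂ : x₁ * x₂ + y₁ * y₂ + z₁ * z₂ = 0) (ho₁₃ : x₁ * x₃ + y₁ * y₃ + z₁ * z₃ = 0)
    (ho₂₃ : x₂ * x₃ + y₂ * y₃ + z₂ * z₃ = 0)
    (hxx : c₁ * (x₁ * x₁) + c₂ * (x₂ * x₂) + c₃ * (x₃ * x₃) = 0)
    (hyy : c₁ * (y₁ * y₁) + c₂ * (y₂ * y₂) + c₃ * (y₃ * y₃) = 0)
    (hzz : c₁ * (z₁ * z₁) + c₂ * (z₂ * z₂) + c₃ * (z₃ * z₃) = 0)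
    (hxy : c₁ * (x₁ * y₁) + c₂ * (x₂ * y₂) + c₃ * (x₃ * y₃) = 0)
    (hxz : c₁ * (x₁ * z₁) + c₂ * (x₂ * z₂) + c₃ * (x₃ * z₃) = 0)
    (hyz : c₁ * (y₁ * z₁) + c₂ * (y₂ * z₂) + c₃ * (y₃ * z₃) = 0) :
    c₁ = 0 ∧ c₂ = 0 ∧ c₃ = 0 := by
  refine ⟨?_, ?_, ?_⟩
  · linear_combination (x₁ * x₁) * hxx + (y₁ * y₁) * hyy + (z₁ * z₁) * hzz
      + 2 * (x₁ * y₁) * hxy + 2 * (x₁ * z₁) * hxz + 2 * (y₁ * z₁) * hyz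
      - c₁ * (x₁ * x₁ + y₁ * y₁ + z₁ * z₁ + 1) * hn₁
      - c₂ * (x₁ * x₂ + y₁ * y₂ + z₁ * z₂) * ho₁₂ - c₃ * (x₁ * x₃ + y₁ * y₃ + z₁ * z₃) * ho₁₃
  · linear_combination (x₂ * x₂) * hxx + (y₂ * y₂) * hyy + (z₂ * z₂) * hzz
      + 2 * (x₂ * y₂) * hxy + 2 * (x₂ * z₂) * hxz + 2 * (y₂ * z₂) * hyz
      - c₁ * (x₁ * x₂ + y₁ * y₂ + z₁ * z₂) * ho₁₂
      - c₂ * (x₂ * x₂ + y₂ * y₂ + z₂ * z₂ + 1) * hn₂ - c₃ * (x₂ * x₃ + y₂ * y₃ + z₂ * z₃) * ho₂₃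
  · linear_combination (x₃ * x₃) * hxx + (y₃ * y₃) * hyy + (z₃ * z₃) * hzz
      + 2 * (x₃ * y₃) * hxy + 2 * (x₃ * z₃) * hxz + 2 * (y₃ * z₃) * hyz
      - c₁ * (x₁ * x₃ + y₁ * y₃ + z₁ * z₃) * ho₁₃ - c₂ * (x₂ * x₃ + y₂ * y₃ + z₂ * z₃) * ho₂₃
      - c₃ * (x₃ * x₃ + y₃ * y₃ + z₃ * z₃ + 1) * hn₃

/- Evaluating the identity at `1, i, j, k` yields the diagonal sums times differences of pair sums
of `X`, and at `1 + i, 1 + j, 1 + k` the off-diagonal sums times differences of entries of `X`. -/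
lemma eq_zero_of_quadratic_identity (X : Fin 4 → ℝ)
    (hD₁ : X 0 + X 1 ≠ X 2 + X 3) (hD₂ : X 0 + X 2 ≠ X 1 + X 3) (hD₃ : X 0 + X 3 ≠ X 1 + X 2)
    (h₁₂ : X 1 ≠ X 2) (h₁₃ : X 1 ≠ X 3) (h₂₃ : X 2 ≠ X 3)
    (c₀ c₁ c₂ c₃ x₁ y₁ z₁ x₂ y₂ z₂ x₃ y₃ z₃ : ℝ)
    (hn₁ : x₁ * x₁ + y₁ * y₁ + z₁ * z₁ = 1) (hn₂ : x₂ * x₂ + y₂ * y₂ + z₂ * z₂ = 1)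
    (hn₃ : x₃ * x₃ + y₃ * y₃ + z₃ * z₃ = 1)
    (ho₁₂ : x₁ * x₂ + y₁ * y₂ + z₁ * z₂ = 0) (ho₁₃ : x₁ * x₃ + y₁ * y₃ + z₁ * z₃ = 0)
    (ho₂₃ : x₂ * x₃ + y₂ * y₃ + z₂ * z₃ = 0)
    (hc : c₀ + c₁ + c₂ + c₃ = 0)
    (hE : ∀ v₁ v₂ v₃ v₄ : ℝ,
      c₀ * (v₁ ^ 2 * X 0 + v₂ ^ 2 * X 1 + v₃ ^ 2 * X 2 + v₄ ^ 2 * X 3)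
      + c₁ * ((v₂ * x₁ + v₃ * y₁ + v₄ * z₁) ^ 2 * X 0 + (v₁ * x₁ + v₃ * z₁ - v₄ * y₁) ^ 2 * X 1
          + (v₁ * y₁ - v₂ * z₁ + v₄ * x₁) ^ 2 * X 2 + (v₁ * z₁ + v₂ * y₁ - v₃ * x₁) ^ 2 * X 3)
      + c₂ * ((v₂ * x₂ + v₃ * y₂ + v₄ * z₂) ^ 2 * X 0 + (v₁ * x₂ + v₃ * z₂ - v₄ * y₂) ^ 2 * X 1
          + (v₁ * y₂ - v₂ * z₂ + v₄ * x₂) ^ 2 * X 2 + (v₁ * z₂ + v₂ * y₂ - v₃ * x₂) ^ 2 * X 3)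
      + c₃ * ((v₂ * x₃ + v₃ * y₃ + v₄ * z₃) ^ 2 * X 0 + (v₁ * x₃ + v₃ * z₃ - v₄ * y₃) ^ 2 * X 1
          + (v₁ * y₃ - v₂ * z₃ + v₄ * x₃) ^ 2 * X 2 + (v₁ * z₃ + v₂ * y₃ - v₃ * x₃) ^ 2 * X 3)
      = 0) :
    c₀ = 0 ∧ c₁ = 0 ∧ c₂ = 0 ∧ c₃ = 0 := by
  set Sx := c₁ * (x₁ * x₁) + c₂ * (x₂ * x₂) + c₃ * (x₃ * x₃)
  set Sy := c₁ * (y₁ * y₁) + c₂ * (y₂ * y₂) + c₃ * (y₃ * y₃)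
  set Sz := c₁ * (z₁ * z₁) + c₂ * (z₂ * z₂) + c₃ * (z₃ * z₃)
  have k₁ : (X 0 + X 1 - (X 2 + X 3)) * (c₀ + Sx - Sy - Sz) = 0 := by
    linear_combination hE 1 0 0 0 + hE 0 1 0 0 - hE 0 0 1 0 - hE 0 0 0 1
  have k₂ : (X 0 + X 2 - (X 1 + X 3)) * (c₀ + Sy - Sx - Sz) = 0 := by
    linear_combination hE 1 0 0 0 + hE 0 0 1 0 - hE 0 1 0 0 - hE 0 0 0 1
  have k₃ : (X 0 + X 3 - (X 1 + X 2)) * (c₀ + Sz - Sx - Sy) = 0 := by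
    linear_combination hE 1 0 0 0 + hE 0 0 0 1 - hE 0 1 0 0 - hE 0 0 1 0
  replace k₁ := (mul_eq_zero.mp k₁).resolve_left (sub_ne_zero.mpr hD₁)
  replace k₂ := (mul_eq_zero.mp k₂).resolve_left (sub_ne_zero.mpr hD₂)
  replace k₃ := (mul_eq_zero.mp k₃).resolve_left (sub_ne_zero.mpr hD₃)
  have hc₀ : c₀ = 0 := by
    linear_combination (k₁ + k₂ + k₃ + c₁ * hn₁ + c₂ * hn₂ + c₃ * hn₃ + hc) / 4
  have t₁ : (X 3 - X 2) * (c₁ * (y₁ * z₁) + c₂ * (y₂ * z₂) + c₃ * (y₃ * z₃)) = 0 := by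
    linear_combination (hE 1 1 0 0 - hE 1 0 0 0 - hE 0 1 0 0) / 2
  have t₂ : (X 1 - X 3) * (c₁ * (x₁ * z₁) + c₂ * (x₂ * z₂) + c₃ * (x₃ * z₃)) = 0 := by
    linear_combination (hE 1 0 1 0 - hE 1 0 0 0 - hE 0 0 1 0) / 2
  have t₃ : (X 2 - X 1) * (c₁ * (x₁ * y₁) + c₂ * (x₂ * y₂) + c₃ * (x₃ * y₃)) = 0 := by
    linear_combination (hE 1 0 0 1 - hE 1 0 0 0 - hE 0 0 0 1) / 2
  obtain ⟨hc₁, hc₂, hc₃⟩ := eq_zero_of_sum_mul_outer_eq_zero c₁ c₂ c₃ x₁ y₁ z₁ x₂ y₂ z₂ x₃ y₃ z₃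
    hn₁ hn₂ hn₃ ho₁₂ ho₁₃ ho₂₃ (by linear_combination hc₀ - (k₂ + k₃) / 2)
    (by linear_combination hc₀ - (k₁ + k₃) / 2) (by linear_combination hc₀ - (k₁ + k₂) / 2)
    ((mul_eq_zero.mp t₃).resolve_left (sub_ne_zero.mpr h₁₂.symm))
    ((mul_eq_zero.mp t₂).resolve_left (sub_ne_zero.mpr h₁₃))
    ((mul_eq_zero.mp t₁).resolve_left (sub_ne_zero.mpr h₂₃.symm))
  exact ⟨hc₀, hc₁, hc₂, hc₃⟩

def PairSumsInjective (X : Fin 4 → ℝ) : Prop :=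
  ∀ s t s' t' : Fin 4, s < t → s' < t' → X s + X t = X s' + X t' → s = s' ∧ t = t'

section Generic

variable {X : Fin 4 → ℝ}

lemma eq_zero_of_sum_mul_payoff_eq_zero_of_apply_zero_eq_one (hXinj : Function.Injective X)
    (hXsum : PairSumsInjective X) {c : Fin 4 → ℝ} (hc : ∑ i, c i = 0) {u : Fin 4 → ℍ}
    (hu : Orthonormal ℝ u) (hu0 : u 0 = 1) (h : ∀ v, ∑ i, c i * payoff X v (u i) = 0)
    (i : Fin 4) : c i = 0 := by
  classical
  have hinner := orthonormal_iff_ite.1 hu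
  have hre (m : Fin 4) (hm : m ≠ 0) : (u m).re = 0 := by
    simpa [hu0, Quaternion.inner_def, hm.symm] using hinner 0 m
  have him (m k : Fin 4) (hm : m ≠ 0) (hk : k ≠ 0) : (u m).imI * (u k).imI
      + (u m).imJ * (u k).imJ + (u m).imK * (u k).imK = if m = k then 1 else 0 := by
    rw [← hinner m k, Quaternion.inner_def]
    simp [hre m hm, hre k hk]
  have hsum (s t s' t' : Fin 4) (hst : s < t) (hst' : s' < t') (hs : s ≠ s') :
      X s + X t ≠ X s' + X t' := fun h => hs (hXsum s t s' t' hst hst' h).1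
  have key := eq_zero_of_quadratic_identity X (hsum 0 1 2 3 (by decide) (by decide) (by decide))
    (hsum 0 2 1 3 (by decide) (by decide) (by decide))
    (hsum 0 3 1 2 (by decide) (by decide) (by decide))
    (hXinj.ne (by decide)) (hXinj.ne (by decide)) (hXinj.ne (by decide))
    (c 0) (c 1) (c 2) (c 3) (u 1).imI (u 1).imJ (u 1).imK (u 2).imI (u 2).imJ (u 2).imK
    (u 3).imI (u 3).imJ (u 3).imK
    (by simpa using him 1 1) (by simpa using him 2 2) (by simpa using him 3 3)
    (by simpa using him 1 2) (by simpa using him 1 3) (by simpa using him 2 3)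
    (by simpa [Fin.sum_univ_four] using hc) fun v₁ v₂ v₃ v₄ => by
      simp only [Fin.sum_univ_four, hu0, payoff_one,
        fun v => payoff_of_re_eq_zero X v (hre 1 (by decide)),
        fun v => payoff_of_re_eq_zero X v (hre 2 (by decide)),
        fun v => payoff_of_re_eq_zero X v (hre 3 (by decide))] at h
      exact h ⟨v₁, v₂, v₃, v₄⟩
  fin_cases i <;> simp [key]

lemma eq_zero_of_sum_mul_payoff_eq_zero (hXinj : Function.Injective X)
    (hXsum : PairSumsInjective X) {c : Fin 4 → ℝ} (hc : ∑ i, c i = 0)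
    {r : Fin 4 → ℍ} (hr : Orthonormal ℝ r) (h : ∀ v, ∑ i, c i * payoff X v (r i) = 0)
    (i : Fin 4) : c i = 0 := by
  have hr0 : ‖star (r 0)‖ = 1 := by rw [Quaternion.norm_star]; exact hr.1 0
  refine eq_zero_of_sum_mul_payoff_eq_zero_of_apply_zero_eq_one hXinj hXsum hc
    (orthonormal_mul_left hr0 hr) ?_
    (fun v => by simpa [payoff_mul_assoc] using h (v * star (r 0))) i
  rw [Quaternion.star_mul_self, Quaternion.normSq_eq_norm_mul_self, hr.1 0]
  norm_num

lemma weights_eq_quarter_of_forall_le (hXinj : Function.Injective X)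
    (hXsum : PairSumsInjective X) {q r : Fin 4 → ℍ} (hq : Orthonormal ℝ q)
    (hr : Orthonormal ℝ r) {a b : Fin 4 → ℝ} (ha : ∑ j, a j = 1) (hapos : ∀ j, 0 < a j)
    (hb : ∑ i, b i = 1)
    (hle : ∀ p, ‖p‖ = 1 →
      ∑ i, b i * payoff X p (r i) ≤ ∑ j, a j * ∑ i, b i * payoff X (q j) (r i))
    (i : Fin 4) : b i = 1 / 4 := by
  set F : ℍ → ℝ := fun p => ∑ i, b i * payoff X p (r i) with hF
  have htrace (f : Fin 4 → ℍ) (hf : Orthonormal ℝ f) : ∑ j, F (f j) = ∑ t, X t := by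
    rw [hF, Finset.sum_comm]
    simp_rw [← Finset.mul_sum, sum_payoff_orthonormal_left X hf (hr.1 _), ← Finset.sum_mul, hb,
      one_mul]
  have hconst (p : ℍ) (hp : ‖p‖ = 1) : F p = (∑ t, X t) / 4 :=
    eq_div_four_of_le_weighted_sum htrace hq ha hapos hle hp
  have hzero := sum_mul_payoff_eq_zero_of_norm_eq_one X (fun i => b i - 1 / 4) r fun v hv => by
    have := hconst v hv
    simp only [hF] at this
    simp only [sub_mul, Finset.sum_sub_distrib, ← Finset.mul_sum, this,
      sum_payoff_orthonormal_right X hv hr]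
    ring
  have := eq_zero_of_sum_mul_payoff_eq_zero hXinj hXsum (c := fun i => b i - 1 / 4)
    (by norm_num [Finset.sum_sub_distrib, hb]) hr hzero i
  linarith

end Generic

lemma integral_eq_sum_of_measure_range_eq_one {α ι : Type*} [MeasurableSpace α]
    [MeasurableSingletonClass α] [Fintype ι] {μ : Measure α} [IsProbabilityMeasure μ]
    {x : ι → α} (hx : Function.Injective x) (h : μ (Set.range x) = 1) (f : α → ℝ) :
    ∫ a, f a ∂μ = ∑ i, μ.real {x i} * f (x i) := by
  classical
  have hae : ∀ᵐ a ∂μ, a ∈ Set.range x :=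
    (ae_mem_iff_measure_eq (Set.finite_range x).measurableSet.nullMeasurableSet).2
      (by rw [h, measure_univ])
  calc ∫ a, f a ∂μ = ∫ a in ↑(Finset.univ.image x), f a ∂μ := by
        rw [Finset.coe_image, Finset.coe_univ, Set.image_univ,
          Measure.restrict_eq_self_of_ae_mem hae]
    _ = ∑ i, μ.real {x i} * f (x i) := by
        rw [setIntegral_finset _ IntegrableOn.finset, Finset.sum_image fun i _ j _ h => hx h]
        rfl

lemma measure_eq_quarter_of_measureReal {α : Type*} [MeasurableSpace α] {μ : Measure α}
    [IsFiniteMeasure μ] {s : Set α} (h : μ.real s = 1 / 4) : μ s = 1 / 4 := by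
  rw [← ofReal_measureReal, h, one_div, ENNReal.ofReal_inv_of_pos (by norm_num)]
  norm_num

lemma isMixed_dirac {p : ℍ} (hp : ‖p‖ = 1) : IsMixed (Measure.dirac p) :=
  ⟨inferInstance, Measure.dirac_apply_of_mem hp⟩

section Nash

variable {X Y : Fin 4 → ℝ} {ν μ : Measure ℍ} {q r : Fin 4 → ℍ} {a b : Fin 4 → ℝ}

lemma IsNash.sum_payoff_le_fst (h : IsNash X Y ν μ)
    (hν : ∀ f : ℍ → ℝ, ∫ p, f p ∂ν = ∑ j, a j * f (q j))
    (hμ : ∀ f : ℍ → ℝ, ∫ p, f p ∂μ = ∑ i, b i * f (r i)) {p : ℍ} (hp : ‖p‖ = 1) :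
    ∑ i, b i * payoff X p (r i) ≤ ∑ j, a j * ∑ i, b i * payoff X (q j) (r i) := by
  simpa [payoffM, hν, hμ] using h.2.2.1 (Measure.dirac p) (isMixed_dirac hp)

lemma IsNash.sum_payoff_le_snd (h : IsNash X Y ν μ)
    (hν : ∀ f : ℍ → ℝ, ∫ p, f p ∂ν = ∑ j, a j * f (q j))
    (hμ : ∀ f : ℍ → ℝ, ∫ p, f p ∂μ = ∑ i, b i * f (r i)) {p : ℍ} (hp : ‖p‖ = 1) :
    ∑ j, a j * payoff Y p (star (q j)) ≤
      ∑ i, b i * ∑ j, a j * payoff Y (star (r i)) (star (q j)) := by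
  have h₂ := h.2.2.2 (Measure.dirac (star p)) (isMixed_dirac (by rwa [Quaternion.norm_star]))
  simp only [payoffM, integral_dirac, hν, hμ, fun j w => payoff_star Y (q j) w, star_star,
    Finset.mul_sum] at h₂
  rw [Finset.sum_comm] at h₂
  simpa only [Finset.mul_sum, mul_left_comm (a _)] using h₂

end Nash

/-- In a Nash equilibrium where each strategy is supported on at most four
pairwise orthogonal unit quaternions, if either support contains four points then each
player plays each of four pairwise orthogonal unit quaternions with probability exactly 1/4. -/
theorem four_point_support_forces_quarter_both (X Y : Fin 4 → ℝ) (hG : Generic X Y)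
    (ν μ : Measure ℍ) (hnash : IsNash X Y ν μ)
    (q r : Fin 4 → ℍ)
    (hq1 : ∀ i, ‖q i‖ = 1) (hq2 : ∀ i j, i ≠ j → qinner (q i) (q j) = 0)
    (hr1 : ∀ i, ‖r i‖ = 1) (hr2 : ∀ i j, i ≠ j → qinner (r i) (r j) = 0)
    (hνsupp : ν (Set.range q) = 1) (hμsupp : μ (Set.range r) = 1)
    (hfour : (∀ i, ν {q i} ≠ 0) ∨ (∀ i, μ {r i} ≠ 0)) :
    (∀ i, ν {q i} = 1/4) ∧ (∀ i, μ {r i} = 1/4) := by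
  obtain ⟨hXinj, hYinj, hXsum, hYsum⟩ := hG
  have := hnash.1.1
  have := hnash.2.1.1
  have hq := orthonormal_of_qinner hq1 hq2
  have hr := orthonormal_of_qinner hr1 hr2
  have hν := integral_eq_sum_of_measure_range_eq_one hq.linearIndependent.injective hνsupp
  have hμ := integral_eq_sum_of_measure_range_eq_one hr.linearIndependent.injective hμsupp
  have ha : ∑ j, ν.real {q j} = 1 := by simpa using (hν fun _ => 1).symm
  have hb : ∑ i, μ.real {r i} = 1 := by simpa using (hμ fun _ => 1).symm
  have h₁ (hpos : ∀ j, 0 < ν.real {q j}) (i : Fin 4) : μ.real {r i} = 1 / 4 :=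
    weights_eq_quarter_of_forall_le hXinj hXsum hq hr ha hpos hb
      (fun _ hp => hnash.sum_payoff_le_fst hν hμ hp) i
  have h₂ (hpos : ∀ i, 0 < μ.real {r i}) (j : Fin 4) : ν.real {q j} = 1 / 4 :=
    weights_eq_quarter_of_forall_le hYinj hYsum (orthonormal_star hr) (orthonormal_star hq) hb
      hpos ha (fun _ hp => hnash.sum_payoff_le_snd hν hμ hp) j
  have hquarter : (∀ j, ν.real {q j} = 1 / 4) ∧ ∀ i, μ.real {r i} = 1 / 4 := by
    rcases hfour with h | h
    · have hb4 := h₁ fun j => ENNReal.toReal_pos (h j) (measure_ne_top _ _)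
      exact ⟨h₂ fun i => by rw [hb4 i]; norm_num, hb4⟩
    · have ha4 := h₂ fun i => ENNReal.toReal_pos (h i) (measure_ne_top _ _)
      exact ⟨ha4, h₁ fun j => by rw [ha4 j]; norm_num⟩
  exact ⟨fun j => measure_eq_quarter_of_measureReal (hquarter.1 j),
    fun i => measure_eq_quarter_of_measureReal (hquarter.2 i)⟩
end
end

section
/- Let G be any two-by-two game and let p, q be unit quaternions. If the pair of Dirac measures (δ_p, δ_q) is a mixed-strategy Nash equilibrium of G^Q, then P₁^Q(p,q) = max{X₁, X₂, X₃, X₄} and P₂^Q(p,q) = max{Y₁, Y₂, Y₃, Y₄}; that is, a pure-strategy equilibrium can occur only if the resulting outcome is simultaneously optimal for both players. -/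
noncomputable section

open MeasureTheory

local notation "ℍ" => Quaternion ℝ

/-!
Against a fixed unit quaternion `q`, Player One reaches every unit outcome `p' * q` by a
unilateral deviation `p'`, in particular each of `1, i, j, k`, which pays `X t`; so an
equilibrium payoff is at least `max X`, and symmetrically for Player Two. Conversely every
payoff is a convex combination of the `X t`, because the squared coordinates of the unit
quaternion `p * q` sum to one.
-/

lemma sum_piQ_sq (r : ℍ) : ∑ t : Fin 4, piQ t r ^ 2 = ‖r‖ ^ 2 := by
  rw [Fin.sum_univ_four, sq ‖r‖, ← Quaternion.normSq_eq_norm_mul_self]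
  simp [piQ, Quaternion.normSq_def']

lemma payoff_le_of_forall_le {X : Fin 4 → ℝ} {M : ℝ} (hX : ∀ t, X t ≤ M) {p q : ℍ}
    (hpq : ‖p * q‖ = 1) : payoff X p q ≤ M :=
  calc payoff X p q ≤ ∑ t : Fin 4, piQ t (p * q) ^ 2 * M :=
        Finset.sum_le_sum fun t _ => mul_le_mul_of_nonneg_left (hX t) (sq_nonneg _)
    _ = M := by rw [← Finset.sum_mul, sum_piQ_sq, hpq, one_pow, one_mul]

lemma payoff_eq_max_of_forall_le {X : Fin 4 → ℝ} {p q : ℍ} (hpq : ‖p * q‖ = 1)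
    (h : ∀ t, X t ≤ payoff X p q) :
    payoff X p q = max (max (X 0) (X 1)) (max (X 2) (X 3)) := by
  refine le_antisymm (payoff_le_of_forall_le (fun t => ?_) hpq)
    (max_le (max_le (h 0) (h 1)) (max_le (h 2) (h 3)))
  fin_cases t <;> simp

def basisQ : Fin 4 → ℍ := ![1, qI, qJ, qK]

lemma piQ_basisQ (s t : Fin 4) : piQ s (basisQ t) = if s = t then 1 else 0 := by
  fin_cases s <;> fin_cases t <;>
    simp [piQ, basisQ, qI, qJ, qK, Quaternion.re_one, Quaternion.imI_one, Quaternion.imJ_one,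
      Quaternion.imK_one]

lemma norm_basisQ (t : Fin 4) : ‖basisQ t‖ = 1 := by
  have h : ‖basisQ t‖ ^ 2 = 1 := by simp [← sum_piQ_sq, piQ_basisQ]
  rwa [pow_eq_one_iff_of_nonneg (norm_nonneg _) two_ne_zero] at h

lemma payoff_of_mul_eq_basisQ (X : Fin 4 → ℝ) {p q : ℍ} {t : Fin 4} (h : p * q = basisQ t) :
    payoff X p q = X t := by
  simp [payoff, h, piQ_basisQ]

lemma isMixed_dirac_iff {r : ℍ} : IsMixed (Measure.dirac r) ↔ ‖r‖ = 1 := by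
  have hS : MeasurableSet {p : ℍ | ‖p‖ = 1} :=
    (isClosed_eq continuous_norm continuous_const).measurableSet
  simp [IsMixed, Measure.dirac_apply' _ hS, Set.indicator, Measure.dirac.isProbabilityMeasure]

lemma payoffM_dirac (X : Fin 4 → ℝ) (p q : ℍ) :
    payoffM X (Measure.dirac p) (Measure.dirac q) = payoff X p q := by
  simp [payoffM, integral_dirac]

namespace IsNash

variable {X Y : Fin 4 → ℝ} {p q : ℍ}

lemma norm_left_eq_one (h : IsNash X Y (Measure.dirac p) (Measure.dirac q)) : ‖p‖ = 1 :=
  isMixed_dirac_iff.mp h.1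

lemma norm_right_eq_one (h : IsNash X Y (Measure.dirac p) (Measure.dirac q)) : ‖q‖ = 1 :=
  isMixed_dirac_iff.mp h.2.1

lemma le_payoff_left (h : IsNash X Y (Measure.dirac p) (Measure.dirac q)) (t : Fin 4) :
    X t ≤ payoff X p q := by
  have hq : q ≠ 0 := norm_ne_zero_iff.mp (by rw [h.norm_right_eq_one]; exact one_ne_zero)
  have hdev : ‖basisQ t * q⁻¹‖ = 1 := by
    rw [norm_mul, norm_inv, norm_basisQ, h.norm_right_eq_one, inv_one, one_mul]
  have hle := h.2.2.1 _ (isMixed_dirac_iff.mpr hdev)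
  rwa [payoffM_dirac, payoffM_dirac,
    payoff_of_mul_eq_basisQ X (by rw [mul_assoc, inv_mul_cancel₀ hq, mul_one])] at hle

lemma le_payoff_right (h : IsNash X Y (Measure.dirac p) (Measure.dirac q)) (t : Fin 4) :
    Y t ≤ payoff Y p q := by
  have hp : p ≠ 0 := norm_ne_zero_iff.mp (by rw [h.norm_left_eq_one]; exact one_ne_zero)
  have hdev : ‖p⁻¹ * basisQ t‖ = 1 := by
    rw [norm_mul, norm_inv, norm_basisQ, h.norm_left_eq_one, inv_one, one_mul]
  have hle := h.2.2.2 _ (isMixed_dirac_iff.mpr hdev)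
  rwa [payoffM_dirac, payoffM_dirac,
    payoff_of_mul_eq_basisQ Y (by rw [← mul_assoc, mul_inv_cancel₀ hp, one_mul])] at hle

end IsNash

theorem pure_nash_is_jointly_optimal_general (X Y : Fin 4 → ℝ) (p q : ℍ)
    (hnash : IsNash X Y (Measure.dirac p) (Measure.dirac q)) :
    payoff X p q = max (max (X 0) (X 1)) (max (X 2) (X 3)) ∧
      payoff Y p q = max (max (Y 0) (Y 1)) (max (Y 2) (Y 3)) := by
  have hpq : ‖p * q‖ = 1 := by
    rw [norm_mul, hnash.norm_left_eq_one, hnash.norm_right_eq_one, one_mul]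
  exact ⟨payoff_eq_max_of_forall_le hpq hnash.le_payoff_left,
    payoff_eq_max_of_forall_le hpq hnash.le_payoff_right⟩

/-- A pure-strategy Nash equilibrium of `G^Q` can occur only if the
resulting outcome is simultaneously optimal for both players. -/
theorem pure_nash_is_jointly_optimal (X Y : Fin 4 → ℝ) (p q : ℍ)
    (hp : ‖p‖ = 1) (hq : ‖q‖ = 1)
    (hnash : IsNash X Y (Measure.dirac p) (Measure.dirac q)) :
    payoff X p q = max (max (X 0) (X 1)) (max (X 2) (X 3)) ∧
      payoff Y p q = max (max (Y 0) (Y 1)) (max (Y 2) (Y 3)) :=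
  pure_nash_is_jointly_optimal_general X Y p q hnash
end
end

section
/- Let μ be a mixed quantum strategy and let X = (X₁,X₂,X₃,X₄) ∈ ℝ⁴. Then there exists a symmetric 4×4 real matrix M such that for every quaternion p, ∫ Σ_{t=1}^4 π_t(p·q)² X_t dμ(q) = Σ_{s=1}^4 Σ_{t=1}^4 M_{st} π_s(p) π_t(p), and moreover the trace of M equals X₁ + X₂ + X₃ + X₄. In particular, the map p ↦ ∫ P₁^Q(p,q) dμ(q) on the unit quaternions is the restriction to S³ of a real quadratic form on ℍ ≅ ℝ⁴ whose trace is X₁ + X₂ + X₃ + X₄. -/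
noncomputable section

open MeasureTheory

local notation "ℍ" => Quaternion ℝ

/-- Coefficient matrix: `π_u(p*q) = ∑ s, Cmat q u s * π_s(p)`. -/
def Cmat (q : ℍ) : Matrix (Fin 4) (Fin 4) ℝ :=
  !![q.re, -q.imI, -q.imJ, -q.imK;
     q.imI, q.re, q.imK, -q.imJ;
     q.imJ, -q.imK, q.re, q.imI;
     q.imK, q.imJ, -q.imI, q.re]

lemma piQ_mul (t : Fin 4) (p q : ℍ) :
    piQ t (p * q) = ∑ s : Fin 4, Cmat q t s * piQ s p := by
  fin_cases t <;>
    simp [piQ, Cmat, Fin.sum_univ_four, Quaternion.re_mul, Quaternion.imI_mul,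
      Quaternion.imJ_mul, Quaternion.imK_mul] <;> ring

lemma payoff_expand (X : Fin 4 → ℝ) (p q : ℍ) :
    payoff X p q = ∑ s : Fin 4, ∑ t : Fin 4,
      (∑ u : Fin 4, X u * Cmat q u s * Cmat q u t) * piQ s p * piQ t p := by
  simp only [payoff, piQ_mul, Fin.sum_univ_four]
  ring

attribute [fun_prop] Quaternion.continuous_re Quaternion.continuous_imI
  Quaternion.continuous_imJ Quaternion.continuous_imK

lemma continuous_Cmat (s t : Fin 4) : Continuous fun q : ℍ => Cmat q s t := by
  fin_cases s <;> fin_cases t <;> simp [Cmat] <;> fun_prop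

lemma sumsq_eq_one {q : ℍ} (h : ‖q‖ = 1) :
    q.re ^ 2 + q.imI ^ 2 + q.imJ ^ 2 + q.imK ^ 2 = 1 := by
  have h1 : Quaternion.normSq q = ‖q‖ * ‖q‖ := (Quaternion.normSq_eq_norm_mul_self q)
  rw [h] at h1
  have h2 := Quaternion.normSq_def' q
  nlinarith [h1, h2]

lemma abs_le_one_of_sq {x : ℝ} (h : x ^ 2 ≤ 1) : |x| ≤ 1 :=
  abs_le_one_iff_mul_self_le_one.2 (by nlinarith)

lemma Cmat_abs_le {q : ℍ} (h : ‖q‖ = 1) (u s : Fin 4) : |Cmat q u s| ≤ 1 := by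
  have hs := sumsq_eq_one h
  fin_cases u <;> fin_cases s <;> simp [Cmat] <;>
    exact abs_le_one_of_sq (by nlinarith [sq_nonneg q.re, sq_nonneg q.imI, sq_nonneg q.imJ, sq_nonneg q.imK])

lemma ae_unit {μ : Measure ℍ} (hμ : IsMixed μ) : ∀ᵐ q ∂μ, ‖q‖ = 1 := by
  obtain ⟨hprob, hone⟩ := hμ
  have hmeas : MeasurableSet {p : ℍ | ‖p‖ = 1} :=
    (isClosed_eq continuous_norm continuous_const).measurableSet
  have hc : μ {p : ℍ | ‖p‖ = 1}ᶜ = 0 := by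
    rw [measure_compl hmeas (by simp [hone])]
    simp [hone, hprob.measure_univ]
  exact (MeasureTheory.ae_iff).2 (by simpa [Set.compl_setOf] using hc)

lemma g_integrable {μ : Measure ℍ} (hμ : IsMixed μ) (X : Fin 4 → ℝ) (s t : Fin 4) :
    Integrable (fun q : ℍ => ∑ u : Fin 4, X u * Cmat q u s * Cmat q u t) μ := by
  have : IsProbabilityMeasure μ := hμ.1
  have hcont : Continuous fun q : ℍ => ∑ u : Fin 4, X u * Cmat q u s * Cmat q u t := by
    apply continuous_finset_sum
    intro u _
    exact ((continuous_const.mul (continuous_Cmat u s)).mul (continuous_Cmat u t))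
  refine (integrable_const (∑ u : Fin 4, |X u|)).mono' hcont.aestronglyMeasurable ?_
  filter_upwards [ae_unit hμ] with q hq
  calc ‖∑ u : Fin 4, X u * Cmat q u s * Cmat q u t‖
      ≤ ∑ u : Fin 4, ‖X u * Cmat q u s * Cmat q u t‖ := norm_sum_le _ _
    _ ≤ ∑ u : Fin 4, |X u| := by
        apply Finset.sum_le_sum
        intro u _
        rw [Real.norm_eq_abs, abs_mul, abs_mul]
        have h1 := Cmat_abs_le hq u s
        have h2 := Cmat_abs_le hq u t
        have h3 := abs_nonneg (X u)
        have h4 := abs_nonneg (Cmat q u s)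
        have h5 := abs_nonneg (Cmat q u t)
        have := mul_le_mul (mul_le_mul le_rfl h1 h4 h3) h2 h5
          (by positivity : (0:ℝ) ≤ |X u| * 1)
        simpa using this

/-- Player One's expected payoff against `μ` is the restriction to `S³` of a
real quadratic form on ℍ ≅ ℝ⁴ whose trace is `X₁ + X₂ + X₃ + X₄`. -/
theorem payoff_is_quadratic_form (μ : Measure ℍ) (hμ : IsMixed μ) (X : Fin 4 → ℝ) :
    ∃ M : Matrix (Fin 4) (Fin 4) ℝ, M.IsSymm ∧
      (∀ p : ℍ, ∫ q, payoff X p q ∂μ =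
        ∑ s : Fin 4, ∑ t : Fin 4, M s t * piQ s p * piQ t p) ∧
      Matrix.trace M = ∑ t : Fin 4, X t := by
  classical
  have hprob : IsProbabilityMeasure μ := hμ.1
  set g : Fin 4 → Fin 4 → ℍ → ℝ :=
    fun s t q => ∑ u : Fin 4, X u * Cmat q u s * Cmat q u t with hg
  refine ⟨Matrix.of fun s t => ∫ q, g s t q ∂μ, ?_, ?_, ?_⟩
  · ext s t
    simp only [Matrix.transpose_apply, Matrix.of_apply]
    congr 1
    ext q
    simp only [hg]
    exact Finset.sum_congr rfl fun u _ => by ring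
  · intro p
    have h1 : ∀ q : ℍ, payoff X p q =
        ∑ s : Fin 4, ∑ t : Fin 4, g s t q * piQ s p * piQ t p :=
      fun q => payoff_expand X p q
    calc ∫ q, payoff X p q ∂μ
        = ∫ q, ∑ s : Fin 4, ∑ t : Fin 4, g s t q * piQ s p * piQ t p ∂μ := by
          simp only [h1]
      _ = ∑ s : Fin 4, ∑ t : Fin 4, ∫ q, g s t q * piQ s p * piQ t p ∂μ := by
          rw [integral_finset_sum]
          · exact Finset.sum_congr rfl fun s _ => integral_finset_sum _
              (fun t _ => ((g_integrable hμ X s t).mul_const _).mul_const _)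
          · intro s _
            exact integrable_finset_sum _
              (fun t _ => ((g_integrable hμ X s t).mul_const _).mul_const _)
      _ = ∑ s : Fin 4, ∑ t : Fin 4, (∫ q, g s t q ∂μ) * piQ s p * piQ t p := by
          refine Finset.sum_congr rfl fun s _ => Finset.sum_congr rfl fun t _ => ?_
          rw [MeasureTheory.integral_mul_const, MeasureTheory.integral_mul_const]
  · have htr : Matrix.trace (Matrix.of fun s t => ∫ q, g s t q ∂μ)
        = ∑ s : Fin 4, ∫ q, g s s q ∂μ := rfl
    rw [htr, ← integral_finset_sum _ (fun s _ => g_integrable hμ X s s)]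
    have : ∫ q, ∑ s : Fin 4, g s s q ∂μ = ∫ _q, (∑ t : Fin 4, X t) ∂μ := by
      apply integral_congr_ae
      filter_upwards [ae_unit hμ] with q hq
      have hs := sumsq_eq_one hq
      simp only [hg, Fin.sum_univ_four]
      simp only [Cmat, Matrix.of_apply, Matrix.cons_val_zero, Matrix.cons_val_one,
        Matrix.head_cons, Matrix.cons_val_two, Matrix.tail_cons, Matrix.cons_val_three]
      linear_combination (X 0 + X 1 + X 2 + X 3) * hs
    rw [this]
    simp
end
end

section
/- Let p, q, r, s be quaternions all of whose components π_t(p), π_t(q), π_t(r), π_t(s) (t = 1,2,3,4) are nonzero. Then the quadruple (p,q,r,s) is intertwined if and only if there is a permutation σ of {1,2,3,4} such that π_t(p)/π_t(q) = π_{σ(t)}(r)/π_{σ(t)}(s) for all t = 1,2,3,4; that is, the four quotients π₁(p)/π₁(q), π₂(p)/π₂(q), π₃(p)/π₃(q), π₄(p)/π₄(q) are equal, in some order, to the four quotients π₁(r)/π₁(s), π₂(r)/π₂(s), π₃(r)/π₃(s), π₄(r)/π₄(s). -/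
noncomputable section

open MeasureTheory

local notation "ℍ" => Quaternion ℝ

/-! With `a, b, c, d` the coordinates of `p, q, r, s`, the form `K(Xp + Yq)` factors as
`∏ₜ (a_t X + b_t Y)`. If `α K(Xp + Yq) = K(Xr + Ys)`, setting `Y = 1` gives two polynomials in `X`, equal up to the
scalar `α`, whose root multisets `{-b_t/a_t}` and `{-d_t/c_t}` must therefore coincide.
Conversely, matching quotients make the factors proportional, `d_{σ t}(a_t X + b_t Y) =
b_t(c_{σ t} X + d_{σ t} Y)`, and multiplying over `t` gives `α = ∏ d / ∏ b`. -/

open Polynomial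

theorem Multiset.exists_perm_comp_eq_of_map_univ_eq {ι α : Type*} [Fintype ι] {f g : ι → α}
    (h : Finset.univ.val.map f = Finset.univ.val.map g) :
    ∃ σ : Equiv.Perm ι, ∀ t, f (σ t) = g t := by
  classical
  have hcard : ∀ y, Fintype.card {t // g t = y} = Fintype.card {t // f t = y} := fun y => by
    simpa [Fintype.card_subtype, Multiset.count_map, eq_comm, Finset.card_def] using
      congrArg (Multiset.count y) h.symm
  exact ⟨Equiv.ofFiberEquiv fun y => Fintype.equivOfCardEq (hcard y), Equiv.ofFiberEquiv_map _⟩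

section LinearFactors

variable {ι : Type*} [Fintype ι]

theorem roots_prod_C_mul_X_add_C {F : Type*} [Field F] {a : ι → F} (b : ι → F)
    (ha : ∀ t, a t ≠ 0) :
    (∏ t, (C (a t) * X + C (b t))).roots = Finset.univ.val.map fun t => -(b t / a t) := by
  have hroots t : (C (a t) * X + C (b t)).roots = {-(b t / a t)} := by
    rw [roots_C_mul_X_add_C _ (ha t), div_eq_inv_mul]
  have hne : ∏ t, (C (a t) * X + C (b t)) ≠ 0 :=
    Finset.prod_ne_zero_iff.2 fun t _ h => by simpa [h] using hroots t
  rw [roots_prod _ _ hne]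
  simp only [hroots, Multiset.bind_singleton]

theorem exists_perm_div_eq_of_smul_prod_eq {F : Type*} [Field F] [Infinite F]
    {a b c d : ι → F} (ha : ∀ t, a t ≠ 0) (hc : ∀ t, c t ≠ 0) {α : F} (hα : α ≠ 0)
    (h : ∀ x, α * ∏ t, (a t * x + b t) = ∏ t, (c t * x + d t)) :
    ∃ σ : Equiv.Perm ι, ∀ t, b t / a t = d (σ t) / c (σ t) := by
  have hpoly : α • ∏ t, (C (a t) * X + C (b t)) = ∏ t, (C (c t) * X + C (d t)) :=
    Polynomial.funext fun x => by
      simpa only [eval_smul, eval_prod, eval_add, eval_mul, eval_C, eval_X, smul_eq_mul] using h x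
  have hroots := roots_prod_C_mul_X_add_C b ha
  rw [← roots_smul_nonzero _ hα, hpoly, roots_prod_C_mul_X_add_C d hc] at hroots
  obtain ⟨σ, hσ⟩ := Multiset.exists_perm_comp_eq_of_map_univ_eq hroots
  exact ⟨σ, fun t => neg_inj.1 (hσ t).symm⟩

theorem prod_mul_prod_add_eq_of_perm {R : Type*} [CommRing R] {a b c d : ι → R}
    (σ : Equiv.Perm ι) (h : ∀ t, a t * d (σ t) = c (σ t) * b t) (x y : R) :
    (∏ t, d t) * ∏ t, (x * a t + y * b t) = (∏ t, b t) * ∏ t, (x * c t + y * d t) := by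
  rw [← Equiv.prod_comp σ d, ← Equiv.prod_comp σ fun t => x * c t + y * d t,
    ← Finset.prod_mul_distrib, ← Finset.prod_mul_distrib]
  exact Finset.prod_congr rfl fun t _ => by linear_combination x * h t

end LinearFactors

theorem K_smul_add (X Y : ℝ) (p q : ℍ) :
    K (X • p + Y • q) = ∏ t : Fin 4, (X * piQ t p + Y * piQ t q) := by
  simp [K, piQ, Fin.prod_univ_four]

/-- For quaternions with all components nonzero, `(p,q,r,s)` is intertwined
iff the four quotients `π_t(p)/π_t(q)` equal, in some order, the quotients `π_t(r)/π_t(s)`. -/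
theorem intertwined_iff_quotients (p q r s : ℍ)
    (hp : ∀ t : Fin 4, piQ t p ≠ 0) (hq : ∀ t : Fin 4, piQ t q ≠ 0)
    (hr : ∀ t : Fin 4, piQ t r ≠ 0) (hs : ∀ t : Fin 4, piQ t s ≠ 0) :
    Intertwined p q r s ↔
      ∃ σ : Equiv.Perm (Fin 4), ∀ t : Fin 4,
        piQ t p / piQ t q = piQ (σ t) r / piQ (σ t) s := by
  simp only [Intertwined, K_smul_add]
  constructor
  · rintro ⟨α, hα, hK⟩
    obtain ⟨σ, hσ⟩ := exists_perm_div_eq_of_smul_prod_eq hp hr hα fun x => by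
      simpa only [one_mul, mul_comm x] using hK x 1
    exact ⟨σ, fun t => by rw [← inv_div, hσ t, inv_div]⟩
  · rintro ⟨σ, hσ⟩
    have hq' : ∏ t, piQ t q ≠ 0 := Finset.prod_ne_zero_iff.2 fun t _ => hq t
    have hs' : ∏ t, piQ t s ≠ 0 := Finset.prod_ne_zero_iff.2 fun t _ => hs t
    refine ⟨(∏ t, piQ t s) / ∏ t, piQ t q, div_ne_zero hs' hq', fun X Y => ?_⟩
    rw [div_mul_eq_mul_div, div_eq_iff hq', mul_comm _ (∏ t, piQ t q),
      prod_mul_prod_add_eq_of_perm (a := (piQ · p)) (b := (piQ · q)) (c := (piQ · r))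
        (d := (piQ · s)) σ fun t => (div_eq_div_iff (hq t) (hs (σ t))).1 (hσ t)]
end
end
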